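/- Fix n ≥ 2, an index 1 ≤ i < n with j = i+1, a real number q ≠ 0, and points p₁, …, pₙ in a real inner product space E. Define p′ by p′_m = p_m for m ∉ {i, j}, p′_i = p_j, and p′_j = q·p_i + (1−q)·p_j. If the family p₁, …, pₙ is affinely independent, then the family p′₁, …, p′ₙ is affinely independent. Consequently, for q > 0, if v ∈ ℝ^{𝓔ₙ} is the edge norm vector of an affinely independent family of n points in E, then S_i · v is again the edge norm vector of an affinely independent family of n points in E, where S_i is the matrix of the standard braid generator s_{i,i+1} in the simplicial representation. -/

import Mathlib

/-- The index set `𝓔ₙ` of edges: pairs `(k,l)` with `k < l` in `Fin n`. -/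
abbrev EdgeIdx (n : ℕ) : Type := {p : Fin n × Fin n // p.1 < p.2}

/-- The standard basis vector `e_{ab}` of `ℝ^{𝓔ₙ}`, viewed symmetrically in `a, b`
(with the convention `e_{mm} = 0`). -/
def eVec {n : ℕ} (a b : Fin n) : EdgeIdx n → ℝ :=
  fun c => if (c.1.1 = a ∧ c.1.2 = b) ∨ (c.1.1 = b ∧ c.1.2 = a) then 1 else 0

/-- The matrix `S_i` of the standard braid generator `s_{i,i+1}` (here `j = i+1`) in the
simplicial representation (the LKB representation at `t = 1`), given row-wise. -/
def simpGenMatrix (n : ℕ) (i j : Fin n) (q : ℝ) : Matrix (EdgeIdx n) (EdgeIdx n) ℝ :=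
  fun r c =>
    if r.1.1 = i ∧ r.1.2 = j then q ^ 2 * eVec i j c
    else if r.1.1 = i then eVec j r.1.2 c
    else if r.1.2 = i then eVec r.1.1 j c
    else if r.1.2 = j then
      (q ^ 2 - q) * eVec i j c + q * eVec r.1.1 i c + (1 - q) * eVec r.1.1 j c
    else if r.1.1 = j then
      (q ^ 2 - q) * eVec i j c + q * eVec i r.1.2 c + (1 - q) * eVec j r.1.2 c
    else eVec r.1.1 r.1.2 c


/-- The edge norm vector of a labeled family of points: `v(k,l) = ‖p_k − p_l‖²`. -/
noncomputable def edgeNormVec {E : Type*} [NormedAddCommGroup E] [InnerProductSpace ℝ E]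
    {n : ℕ} (p : Fin n → E) : EdgeIdx n → ℝ :=
  fun c => ‖p c.1.1 - p c.1.2‖ ^ 2

/-! Measured from `p j`, the move rescales the edge vector `p i -ᵥ p j` by the unit `q` and then
swaps the labels `i` and `j`, so affine independence survives. Only the edges at the new point
`p' j = lineMap (p j) (p i) q` change length, and the algebraic form of Stewart's theorem,
`|x - lineMap a b t|² = (1 - t)|x - a|² + t|x - b|² - t(1 - t)|a - b|²`, turns each of them into
the corresponding row of `S_i`. -/

open AffineMap Function Matrix

section Affine

variable {k V P ι : Type*} [Ring k] [AddCommGroup V] [Module k V] [AddTorsor V P]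

theorem AffineIndependent.update_lineMap [DecidableEq ι] {p : ι → P}
    (hp : AffineIndependent k p) {i j : ι} (hij : i ≠ j) {q : k} (hq : IsUnit q) :
    AffineIndependent k (update p i (lineMap (p j) (p i) q)) := by
  rw [affineIndependent_iff_linearIndependent_vsub k _ j] at hp ⊢
  -- measured from `p j`, the new family only rescales the vector `p i -ᵥ p j` by `q`
  convert hp.units_smul fun m => if (m : ι) = i then hq.unit else 1 using 1
  ext ⟨m, hm⟩
  by_cases hmi : m = i
  · subst hmi; simp [update_of_ne hm.symm, lineMap_vsub_left]
  · simp [hmi, hij.symm]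

variable [DecidableEq ι]

def braidMove (i j : ι) (q : k) (p : ι → P) : ι → P :=
  fun m => if m = i then p j else if m = j then lineMap (p j) (p i) q else p m

theorem braidMove_eq_update_comp_swap {i j : ι} (hij : i ≠ j) (q : k) (p : ι → P) :
    braidMove i j q p = update p i (lineMap (p j) (p i) q) ∘ Equiv.swap i j := by
  ext m
  by_cases hmi : m = i
  · subst hmi; simp [braidMove, hij.symm]
  by_cases hmj : m = j
  · subst hmj; simp [braidMove, hmi]
  · simp [braidMove, hmi, hmj, Equiv.swap_apply_of_ne_of_ne]

@[simp]
theorem braidMove_apply_left (i j : ι) (q : k) (p : ι → P) : braidMove i j q p i = p j := by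
  simp [braidMove]

@[simp]
theorem braidMove_apply_right {i j : ι} (hij : i ≠ j) (q : k) (p : ι → P) :
    braidMove i j q p j = lineMap (p j) (p i) q := by
  simp [braidMove, hij.symm]

theorem braidMove_apply_of_ne {i j m : ι} (hmi : m ≠ i) (hmj : m ≠ j) (q : k) (p : ι → P) :
    braidMove i j q p m = p m := by
  simp [braidMove, hmi, hmj]

theorem AffineIndependent.braidMove {p : ι → P} (hp : AffineIndependent k p) {i j : ι}
    (hij : i ≠ j) {q : k} (hq : IsUnit q) : AffineIndependent k (braidMove i j q p) := by
  rw [braidMove_eq_update_comp_swap hij]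
  exact (affineIndependent_equiv _).2 (hp.update_lineMap hij hq)

theorem braidMove_eq_ite_smul {E : Type*} [AddCommGroup E] [Module k E] (i j : ι) (q : k)
    (p : ι → E) : braidMove i j q p =
      fun m => if m = i then p j else if m = j then q • p i + (1 - q) • p j else p m := by
  ext m
  unfold braidMove
  rw [lineMap_apply_module, add_comm]

end Affine

theorem dist_lineMap_sq {V P : Type*} [NormedAddCommGroup V] [InnerProductSpace ℝ V]
    [MetricSpace P] [NormedAddTorsor V P] (x a b : P) (t : ℝ) :
    dist x (lineMap a b t) ^ 2
      = (1 - t) * dist x a ^ 2 + t * dist x b ^ 2 - t * (1 - t) * dist a b ^ 2 := by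
  have hx : x -ᵥ lineMap a b t = (1 - t) • (x -ᵥ a) + t • (x -ᵥ b) := by
    rw [lineMap_apply, vsub_vadd_eq_vsub_sub, ← vsub_sub_vsub_cancel_left b a x]
    module
  have hab : a -ᵥ b = (x -ᵥ b) - (x -ᵥ a) := (vsub_sub_vsub_cancel_left a b x).symm
  simp only [dist_eq_norm_vsub V, hx, hab, ← real_inner_self_eq_norm_sq,
    inner_add_left, inner_add_right, inner_sub_left, inner_sub_right, real_inner_smul_left,
    real_inner_smul_right, real_inner_comm (x -ᵥ a)]
  ring

section EdgeNorms

variable {E : Type*} [NormedAddCommGroup E] [InnerProductSpace ℝ E] {n : ℕ}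

theorem eVec_dotProduct {a b : Fin n} (hab : a < b) (v : EdgeIdx n → ℝ) :
    eVec a b ⬝ᵥ v = v ⟨(a, b), hab⟩ := by
  rw [dotProduct, Fintype.sum_eq_single ⟨(a, b), hab⟩]
  · simp [eVec]
  · rintro ⟨⟨k, l⟩, hkl⟩ hc
    have : ¬((k = a ∧ l = b) ∨ (k = b ∧ l = a)) := by
      rintro (⟨rfl, rfl⟩ | ⟨rfl, rfl⟩)
      · exact hc rfl
      · exact lt_asymm hab hkl
    simp [eVec, this]

theorem eVec_comm (a b : Fin n) : eVec a b = eVec b a := by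
  ext c
  simp only [eVec, or_comm]

theorem eVec_self (a : Fin n) : eVec a a = 0 := by
  ext ⟨⟨k, l⟩, hkl⟩
  simp only [eVec, or_self, Pi.zero_apply, ite_eq_right_iff, one_ne_zero, imp_false]
  rintro ⟨rfl, rfl⟩
  exact lt_irrefl _ hkl

theorem eVec_dotProduct_edgeNormVec (r : Fin n → E) (a b : Fin n) :
    eVec a b ⬝ᵥ edgeNormVec r = dist (r a) (r b) ^ 2 := by
  rcases lt_trichotomy a b with hab | rfl | hab
  · simp [eVec_dotProduct hab, edgeNormVec, dist_eq_norm]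
  · simp [eVec_self]
  · simp [eVec_comm a b, eVec_dotProduct hab, edgeNormVec, dist_eq_norm, norm_sub_rev]

theorem simpGenMatrix_mulVec_edgeNormVec {i j : Fin n} (hij : i < j) (q : ℝ) (r : Fin n → E) :
    simpGenMatrix n i j q *ᵥ edgeNormVec r = edgeNormVec (braidMove i j q r) := by
  have hrow (a b : Fin n) : ∑ c, eVec a b c * edgeNormVec r c = dist (r a) (r b) ^ 2 :=
    eVec_dotProduct_edgeNormVec r a b
  ext ⟨⟨k, l⟩, hkl : k < l⟩
  simp only [Matrix.mulVec, simpGenMatrix, dotProduct]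
  split_ifs with hij' hki hli hlj hkj
  all_goals
    simp only [add_mul, mul_assoc, Finset.sum_add_distrib, ← Finset.mul_sum, hrow]
    simp only [edgeNormVec, ← dist_eq_norm]
  · obtain ⟨rfl, rfl⟩ := hij'
    rw [braidMove_apply_left, braidMove_apply_right hij.ne, dist_left_lineMap, Real.norm_eq_abs,
      mul_pow, sq_abs, dist_comm]
  · subst hki
    rw [braidMove_apply_left, braidMove_apply_of_ne hkl.ne' (by simpa using hij')]
  · subst hli
    rw [braidMove_apply_of_ne hki (hkl.trans hij).ne, braidMove_apply_left]
  · subst hlj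
    rw [braidMove_apply_of_ne hki hkl.ne, braidMove_apply_right hij.ne, dist_lineMap_sq,
      dist_comm (r l) (r i)]
    ring
  · subst hkj
    rw [braidMove_apply_right hij.ne, braidMove_apply_of_ne hli hlj, dist_comm (lineMap _ _ q),
      dist_lineMap_sq, dist_comm (r l), dist_comm (r l), dist_comm (r k) (r i)]
    ring
  · rw [braidMove_apply_of_ne hki hkj, braidMove_apply_of_ne hli hlj]

end EdgeNorms

theorem braid_generator_preserves_simplices_general {E : Type*} [NormedAddCommGroup E]
    [InnerProductSpace ℝ E] (n : ℕ) (i j : Fin n)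
    (hij : (i : ℕ) + 1 = (j : ℕ)) (q : ℝ) (hq : q ≠ 0) (p p' : Fin n → E)
    (hp' : p' = fun m => if m = i then p j else if m = j then q • p i + (1 - q) • p j
      else p m) :
    (AffineIndependent ℝ p → AffineIndependent ℝ p') ∧
    (0 < q → ∀ v : EdgeIdx n → ℝ,
      (∃ r : Fin n → E, AffineIndependent ℝ r ∧ v = edgeNormVec r) →
      ∃ r' : Fin n → E, AffineIndependent ℝ r' ∧
        (simpGenMatrix n i j q).mulVec v = edgeNormVec r') := by
  have hlt : i < j := Fin.lt_def.2 (by omega)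
  refine ⟨fun hp => ?_, fun _ v ⟨r, hr, hv⟩ => ?_⟩
  · rw [hp', ← braidMove_eq_ite_smul]
    exact hp.braidMove hlt.ne hq.isUnit
  · exact ⟨braidMove i j q r, hr.braidMove hlt.ne hq.isUnit,
      hv ▸ simpGenMatrix_mulVec_edgeNormVec hlt q r⟩

/-- **Braid generators preserve nondegeneracy.** With `j = i+1` and `q ≠ 0`, the action
of the standard braid generator (rescale the edge `e_{ij}` by `q`, then relabel by the
transposition `(i j)`) sends affinely independent families to affinely independent
families; consequently, for `q > 0`, the matrix `S_i` of the simplicial representation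
sends edge norm vectors of affinely independent families of `n` points in `E` to edge
norm vectors of affinely independent families of `n` points in `E`. -/
theorem braid_generator_preserves_simplices {E : Type*} [NormedAddCommGroup E]
    [InnerProductSpace ℝ E] (n : ℕ) (hn : 2 ≤ n) (i j : Fin n)
    (hij : (i : ℕ) + 1 = (j : ℕ)) (q : ℝ) (hq : q ≠ 0) (p p' : Fin n → E)
    (hp' : p' = fun m => if m = i then p j else if m = j then q • p i + (1 - q) • p j
      else p m) :
    (AffineIndependent ℝ p → AffineIndependent ℝ p') ∧
    (0 < q → ∀ v : EdgeIdx n → ℝ,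
      (∃ r : Fin n → E, AffineIndependent ℝ r ∧ v = edgeNormVec r) →
      ∃ r' : Fin n → E, AffineIndependent ℝ r' ∧
        (simpGenMatrix n i j q).mulVec v = edgeNormVec r') :=
  braid_generator_preserves_simplices_general n i j hij q hq p p' hp'
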